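/- Let p be a prime and f(x) = p·x² + b·x + c with b, c ∈ ℤ such that D = b² - 4pc is a nonzero perfect square. Then λ(f(n)) changes sign infinitely often; that is, there are infinitely many positive integers n with λ(f(n)) = 1 and infinitely many with λ(f(n)) = -1. -/

import Mathlib

/-- The Liouville function `λ(n) = (-1)^Ω(n)`. -/
def liouville (n : ℕ) : ℤ := (-1) ^ (ArithmeticFunction.cardFactors n)

/-!
Choose the sign `ε` with `2p ∣ b - εq`, where `q² = D`, and write `b - εq = 2pA`. Then
`4p f(n) = (2pn + b)² - q²` gives `f(qz - A) = q² z (pz + ε)`, so it suffices that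
`λ(z (pz + ε))` is not eventually constant; this only uses that `λ` is completely multiplicative
with values `±1` and `λ(5) = -1`.

Suppose `λ(z (Pz + ε)) = v` for all `z ≥ Z`, so `λ(Pz + ε) = v λ(z)`. The identity
`(Ma + ε)(M((M+1)s + ε) + ε) = (M((M+1)a + ε) + ε)(Ms + ε)`, taken at `s = MZ`,
propagates `λ(Ma + ε) = c λ(M) λ(a)`, with `c = v λ(P)`, from `M` to `M + 1`. Applied to
`j (j + 2) + 1 = (j + 1)²` or `(j + 1)² - 1 = j (j + 2)` it gives `λ(j + 2) = c λ(j)`, so `λ`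
is eventually `4`-periodic, which contradicts `λ(5Z) = -λ(Z)`.
-/

open Filter

theorem map_add_four_mul_eq_of_map_add_two {M : Type*} [Monoid M] {f : ℤ → M} {Z : ℤ}
    {c : M} (hc : c * c = 1) (h : ∀ j, Z ≤ j → f (j + 2) = c * f j) (j : ℤ) (hj : Z ≤ j) (t : ℕ) :
    f (j + 4 * t) = f j := by
  induction t with
  | zero => simp
  | succ t ih =>
    have hle : Z ≤ j + 4 * t := by omega
    rw [show j + 4 * ((t + 1 : ℕ) : ℤ) = j + 4 * t + 2 + 2 by push_cast; ring,
      h _ (by omega), h _ hle, ← mul_assoc, hc, one_mul, ih]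

structure IsCompletelyMultiplicativeSign (f : ℤ → ℤ) : Prop where
  mul_self : ∀ x, f x * f x = 1
  map_mul : ∀ {x y : ℤ}, 0 < x → 0 < y → f (x * y) = f x * f y

namespace IsCompletelyMultiplicativeSign

variable {f : ℤ → ℤ}

theorem ne_zero (hf : IsCompletelyMultiplicativeSign f) (x : ℤ) : f x ≠ 0 :=
  left_ne_zero_of_mul_eq_one (hf.mul_self x)

theorem map_sq_mul (hf : IsCompletelyMultiplicativeSign f) {a x : ℤ} (ha : 0 < a) (hx : 0 < x) :
    f (a ^ 2 * x) = f x := by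
  rw [hf.map_mul (by positivity) hx, sq, hf.map_mul ha ha, hf.mul_self, one_mul]

theorem eq_of_ne_neg (hf : IsCompletelyMultiplicativeSign f) {v x : ℤ} (hv : v * v = 1)
    (h : f x ≠ -v) : f x = v := by
  have hprod : (f x - v) * (f x + v) = 0 := by linear_combination hf.mul_self x - hv
  rcases mul_eq_zero.1 hprod with hsub | hadd
  · linarith
  · exact absurd (by linarith) h

theorem map_succ_mul_add (hf : IsCompletelyMultiplicativeSign f) {M ε Z c : ℤ} (hM : 1 ≤ M)
    (hε : -1 ≤ ε) (hZ : 2 ≤ Z) (hc : c ≠ 0) (h : ∀ a, Z ≤ a → f (M * a + ε) = c * f M * f a)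
    (a : ℤ) (ha : Z ≤ a) : f ((M + 1) * a + ε) = c * f (M + 1) * f a := by
  have hMZ : Z ≤ M * Z := by nlinarith
  have hs : Z ≤ (M + 1) * (M * Z) + ε := by nlinarith
  have ht : Z ≤ (M + 1) * a + ε := by nlinarith
  have hpos : ∀ x, Z ≤ x → 0 < M * x + ε := fun x hx => by nlinarith
  have key := congrArg f (show (M * a + ε) * (M * ((M + 1) * (M * Z) + ε) + ε)
      = (M * ((M + 1) * a + ε) + ε) * (M * (M * Z) + ε) by ring)
  rw [hf.map_mul (hpos a ha) (hpos _ hs), hf.map_mul (hpos _ ht) (hpos _ hMZ)] at key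
  have hshift : (M + 1) * (M * Z) + ε = M * ((M + 1) * Z) + ε := by ring
  rw [h a ha, h _ hs, hshift, h _ (by nlinarith), h _ ht, h _ hMZ,
    hf.map_mul (by linarith) (by linarith), hf.map_mul (by linarith) (by linarith)] at key
  refine mul_left_cancel₀ (by simp [hc, hf.ne_zero] : c ^ 2 * f M ^ 3 * f Z ≠ 0) ?_
  linear_combination -key

theorem map_mul_add (hf : IsCompletelyMultiplicativeSign f) {P ε Z v : ℤ} (hP : 1 ≤ P)
    (hε : -1 ≤ ε) (hZ : 2 ≤ Z) (h : ∀ z, Z ≤ z → f (z * (P * z + ε)) = v) :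
    ∀ M, P ≤ M → ∀ a, Z ≤ a → f (M * a + ε) = v * f P * f M * f a := by
  have hc : v * f P ≠ 0 := mul_ne_zero (h Z le_rfl ▸ hf.ne_zero _) (hf.ne_zero P)
  refine Int.leInduction (fun a ha => ?_) fun M hPM ih =>
    hf.map_succ_mul_add (by linarith) hε hZ hc ih
  have hva := h a ha
  rw [hf.map_mul (by linarith) (by nlinarith)] at hva
  linear_combination f a * hva - f (P * a + ε) * hf.mul_self a - v * f a * hf.mul_self P

theorem map_add_two (hf : IsCompletelyMultiplicativeSign f) {P ε Z v : ℤ} (hP : 1 ≤ P)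
    (hε : ε = 1 ∨ ε = -1) (hPZ : P ≤ Z) (hZ : 2 ≤ Z)
    (h : ∀ z, Z ≤ z → f (z * (P * z + ε)) = v) (j : ℤ) (hj : Z ≤ j) :
    f (j + 2) = v * f P * f j := by
  have hv : v * v = 1 := h Z le_rfl ▸ hf.mul_self _
  have hmain := hf.map_mul_add hP (by rcases hε with rfl | rfl <;> norm_num) hZ h
  rcases hε with rfl | rfl
  · have hsq := hmain j (by linarith) (j + 2) (by linarith)
    rw [show j * (j + 2) + 1 = (j + 1) * (j + 1) by ring,
      hf.map_mul (by linarith) (by linarith), hf.mul_self] at hsq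
    linear_combination -(v * f P * f j) * hsq - f (j + 2) * f j ^ 2 * f P ^ 2 * hv
      - f (j + 2) * f j ^ 2 * hf.mul_self P - f (j + 2) * hf.mul_self j
  · have hsq := hmain (j + 1) (by linarith) (j + 1) (by linarith)
    rw [show (j + 1) * (j + 1) + -1 = j * (j + 2) by ring,
      hf.map_mul (by linarith) (by linarith), mul_assoc (v * f P), hf.mul_self, mul_one] at hsq
    linear_combination f j * hsq - f (j + 2) * hf.mul_self j

theorem not_eventually_map_mul_mul_add_eq (hf : IsCompletelyMultiplicativeSign f)
    (h5 : f 5 = -1) {P ε : ℤ} (hP : 1 ≤ P) (hε : ε = 1 ∨ ε = -1) (v : ℤ) :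
    ¬ ∀ᶠ z in atTop, f (z * (P * z + ε)) = v := by
  intro hev
  obtain ⟨Z, hZ⟩ := eventually_atTop.1 (hev.and (eventually_ge_atTop (max P 2)))
  have hPZ : max P 2 ≤ Z := (hZ Z le_rfl).2
  have h z (hz : Z ≤ z) := (hZ z hz).1
  have hv : v * v = 1 := h Z le_rfl ▸ hf.mul_self _
  have hc : v * f P * (v * f P) = 1 := by
    rw [mul_mul_mul_comm, hv, hf.mul_self, one_mul]
  have hper := map_add_four_mul_eq_of_map_add_two hc
    (hf.map_add_two hP hε (le_of_max_le_left hPZ) (le_of_max_le_right hPZ) h) Z le_rfl Z.toNat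
  rw [show Z + 4 * (Z.toNat : ℤ) = 5 * Z by omega,
    hf.map_mul (by norm_num) (by omega), h5] at hper
  exact hf.ne_zero Z (by linarith)

theorem frequently_map_mul_mul_add_eq (hf : IsCompletelyMultiplicativeSign f) (h5 : f 5 = -1)
    {P ε v : ℤ} (hP : 1 ≤ P) (hε : ε = 1 ∨ ε = -1) (hv : v * v = 1) :
    ∃ᶠ z in atTop, f (z * (P * z + ε)) = v :=
  (not_eventually.1 (hf.not_eventually_map_mul_mul_add_eq h5 hP hε (-v))).mono
    fun _ hz => hf.eq_of_ne_neg hv hz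

end IsCompletelyMultiplicativeSign

theorem liouville_mul_self (n : ℕ) : liouville n * liouville n = 1 := by
  rw [liouville, ← pow_add, Even.neg_one_pow ⟨_, rfl⟩]

theorem liouville_mul {m n : ℕ} (hm : m ≠ 0) (hn : n ≠ 0) :
    liouville (m * n) = liouville m * liouville n := by
  simp only [liouville, ArithmeticFunction.cardFactors_mul hm hn, pow_add]

theorem liouville_prime {p : ℕ} (hp : p.Prime) : liouville p = -1 := by
  rw [liouville, ArithmeticFunction.cardFactors_apply_prime hp, pow_one]

theorem isCompletelyMultiplicativeSign_liouville_toNat :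
    IsCompletelyMultiplicativeSign fun x : ℤ => liouville x.toNat where
  mul_self x := liouville_mul_self _
  map_mul {x y} hx hy := by
    rw [Int.toNat_mul hx.le hy.le, liouville_mul (by omega) (by omega)]

theorem exists_sign_two_mul_dvd_sub {p b c q : ℤ} (hp : Prime p)
    (hq : b ^ 2 - 4 * p * c = q ^ 2) : ∃ ε : ℤ, (ε = 1 ∨ ε = -1) ∧ 2 * p ∣ b - ε * q := by
  have hprod : (b - q) * (b + q) = 4 * p * c := by linear_combination hq
  have heven : Even (b - q) := by
    have hprod_even : Even ((b - q) * (b + q)) := ⟨2 * p * c, by linear_combination hprod⟩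
    rcases Int.even_mul.1 hprod_even with h | h
    · exact h
    · exact (show b - q = b + q - 2 * q by ring) ▸ h.sub (even_two_mul q)
  obtain ⟨s, hs⟩ := heven
  have hsp : s * (s + q) = p * c := by
    refine mul_left_cancel₀ (four_ne_zero : (4 : ℤ) ≠ 0) ?_
    rw [show b = s + s + q by linarith] at hprod
    linear_combination hprod
  rcases hp.dvd_or_dvd ⟨c, by rw [hsp]⟩ with ⟨k, hk⟩ | ⟨k, hk⟩
  · exact ⟨1, Or.inl rfl, k, by linear_combination hs + 2 * hk⟩
  · exact ⟨-1, Or.inr rfl, k, by linear_combination hs + 2 * hk⟩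

theorem quadratic_eval_mul_sub_eq {P b c q ε A : ℤ} (hP : P ≠ 0)
    (hq : b ^ 2 - 4 * P * c = q ^ 2) (hε : ε * ε = 1) (hA : b - ε * q = 2 * P * A) (z : ℤ) :
    P * (q * z - A) ^ 2 + b * (q * z - A) + c = q ^ 2 * (z * (P * z + ε)) := by
  refine mul_left_cancel₀ (mul_ne_zero four_ne_zero hP : (4 : ℤ) * P ≠ 0) ?_
  linear_combination (2 * P * (q * z - A) + b + 2 * P * q * z + ε * q) * hA - hq + q ^ 2 * hε

/-- For a prime `p` and `f(x) = p x² + b x + c` whose discriminant `D = b² - 4pc` is a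
nonzero perfect square, `λ(f(n))` changes sign infinitely often. -/
theorem prime_quadratic_changes_sign (p : ℕ) (hp : p.Prime) (b c : ℤ)
    (h : ∃ q : ℤ, 1 ≤ q ∧ b ^ 2 - 4 * p * c = q ^ 2) :
    {n : ℤ | 0 < n ∧ liouville ((p : ℤ) * n ^ 2 + b * n + c).toNat = 1}.Infinite ∧
      {n : ℤ | 0 < n ∧ liouville ((p : ℤ) * n ^ 2 + b * n + c).toNat = -1}.Infinite := by
  obtain ⟨q, hq1, hq⟩ := h
  obtain ⟨ε, hε, A, hA⟩ := exists_sign_two_mul_dvd_sub (Nat.prime_iff_prime_int.1 hp) hq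
  have hP : (1 : ℤ) ≤ p := by exact_mod_cast hp.one_lt.le
  have hf := isCompletelyMultiplicativeSign_liouville_toNat
  have hshift : Tendsto (fun z : ℤ => q * z - A) atTop atTop :=
    tendsto_atTop_add_const_right _ (-A) (tendsto_id.const_mul_atTop' (by linarith))
  suffices ∀ v : ℤ, v * v = 1 →
      {n : ℤ | 0 < n ∧ liouville ((p : ℤ) * n ^ 2 + b * n + c).toNat = v}.Infinite from
    ⟨this 1 rfl, this (-1) rfl⟩
  intro v hv
  refine frequently_cofinite_iff_infinite.1 (Frequently.filter_mono ?_ atTop_le_cofinite)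
  have h5 : liouville (5 : ℤ).toNat = -1 := liouville_prime (p := 5) (by norm_num)
  refine hshift.frequently (((hf.frequently_map_mul_mul_add_eq h5 hP hε hv).and_eventually
    ((hshift.eventually_gt_atTop 0).and (eventually_gt_atTop 1))).mono ?_)
  rintro z ⟨hz, hn, hz0⟩
  refine ⟨hn, ?_⟩
  have hpz : z ≤ p * z := le_mul_of_one_le_left (by linarith) hP
  have hε2 : ε * ε = 1 := by rcases hε with rfl | rfl <;> norm_num
  rw [quadratic_eval_mul_sub_eq (by positivity) hq hε2 hA z]
  exact (hf.map_sq_mul (by linarith)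
    (mul_pos (by linarith) (by rcases hε with rfl | rfl <;> linarith))).trans hz
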